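/- arXiv:2307.05965 — 3 statements merged into one kernel-verified Lean document; each statement's English description precedes it below -/
import Mathlib

section
/- Let ε ∈ (0,1), t ≥ 1 real, and let x < y be positive integers with y > (10/ε)^{1/ε}. Then there is a positive integer a such that, setting x̃ = y and ỹ = a·y + x, one has t ≤ (log ỹ)/(log x̃) < t + ε. -/
/-!
Take `a = ⌈y^(t-1)⌉`. Then `y^t ≤ a y + x < (y^(t-1) + 1) y + y ≤ 3 y^t`, and the hypothesis on
`y` says `y^ε > 10/ε > 3`, so `y^t ≤ a y + x < y^(t+ε)`; taking `log_y` gives the claim.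
-/

open Real

lemma rpow_sub_one_mul {y : ℝ} (hy : y ≠ 0) (t : ℝ) : y ^ (t - 1) * y = y ^ t := by
  rw [rpow_sub_one hy, div_mul_cancel₀ _ hy]

lemma rpow_le_ceil_rpow_sub_one_mul_add {y x : ℝ} (hy : 0 < y) (hx : 0 ≤ x) (t : ℝ) :
    y ^ t ≤ ⌈y ^ (t - 1)⌉₊ * y + x := by
  have hceil : y ^ (t - 1) * y ≤ ⌈y ^ (t - 1)⌉₊ * y :=
    mul_le_mul_of_nonneg_right (Nat.le_ceil _) hy.le
  rw [← rpow_sub_one_mul hy.ne' t]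
  linarith

lemma ceil_rpow_sub_one_mul_add_lt {y x t : ℝ} (hy : 1 ≤ y) (hxy : x < y) (ht : 1 ≤ t) :
    ⌈y ^ (t - 1)⌉₊ * y + x < 3 * y ^ t := by
  have hy0 : 0 < y := by linarith
  have hceil : (⌈y ^ (t - 1)⌉₊ : ℝ) * y < (y ^ (t - 1) + 1) * y :=
    mul_lt_mul_of_pos_right (Nat.ceil_lt_add_one (rpow_nonneg hy0.le _)) hy0
  have hy_le : y ≤ y ^ t := self_le_rpow_of_one_le hy ht
  rw [add_one_mul, rpow_sub_one_mul hy0.ne'] at hceil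
  linarith

lemma three_lt_rpow_of_rpow_one_div_lt {ε y : ℝ} (hε : 0 < ε) (hε1 : ε < 1) (hy : 0 ≤ y)
    (h : (10 / ε) ^ (1 / ε) < y) : 3 < y ^ ε := by
  rw [one_div, rpow_inv_lt_iff_of_pos (by positivity) hy hε] at h
  have : 10 < 10 / ε := by rw [lt_div_iff₀ hε]; linarith
  linarith

theorem targeting_lemma_general (ε t : ℝ) (hε : 0 < ε) (hε1 : ε < 1) (ht : 1 ≤ t)
    (x y : ℕ) (hxy : x < y) (hy : (y : ℝ) > (10 / ε) ^ (1 / ε)) :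
    ∃ a : ℕ, 0 < a ∧
      t ≤ Real.log ((a * y + x : ℕ) : ℝ) / Real.log (y : ℝ) ∧
      Real.log ((a * y + x : ℕ) : ℝ) / Real.log (y : ℝ) < t + ε := by
  have hyε : 3 < (y : ℝ) ^ ε := three_lt_rpow_of_rpow_one_div_lt hε hε1 y.cast_nonneg hy
  have hy1 : 1 < (y : ℝ) :=
    lt_of_not_ge fun h => by linarith [rpow_le_one y.cast_nonneg h hε.le]
  have hy0 : 0 < (y : ℝ) := by linarith
  have hxy' : (x : ℝ) < y := by exact_mod_cast hxy
  set a := ⌈(y : ℝ) ^ (t - 1)⌉₊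
  have hlow : (y : ℝ) ^ t ≤ ((a * y + x : ℕ) : ℝ) := by
    push_cast
    exact rpow_le_ceil_rpow_sub_one_mul_add hy0 x.cast_nonneg t
  have hup : ((a * y + x : ℕ) : ℝ) < (y : ℝ) ^ (t + ε) := by
    push_cast
    calc (a : ℝ) * y + x < 3 * (y : ℝ) ^ t := ceil_rpow_sub_one_mul_add_lt hy1.le hxy' ht
      _ < (y : ℝ) ^ ε * (y : ℝ) ^ t := by gcongr
      _ = (y : ℝ) ^ (t + ε) := by rw [rpow_add hy0, mul_comm]
  have hN : (0 : ℝ) < ((a * y + x : ℕ) : ℝ) := (rpow_pos_of_pos hy0 t).trans_le hlow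
  refine ⟨a, Nat.ceil_pos.mpr (rpow_pos_of_pos hy0 _), ?_, ?_⟩
  · rwa [log_div_log, le_logb_iff_rpow_le hy1 hN]
  · rwa [log_div_log, logb_lt_iff_lt_rpow hy1 hN]

theorem targeting_lemma (ε t : ℝ) (hε : 0 < ε) (hε1 : ε < 1) (ht : 1 ≤ t)
    (x y : ℕ) (hx : 0 < x) (hxy : x < y) (hy : (y : ℝ) > (10 / ε) ^ (1 / ε)) :
    ∃ a : ℕ, 0 < a ∧
      t ≤ Real.log ((a * y + x : ℕ) : ℝ) / Real.log (y : ℝ) ∧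
      Real.log ((a * y + x : ℕ) : ℝ) / Real.log (y : ℝ) < t + ε :=
  targeting_lemma_general ε t hε hε1 ht x y hxy hy
end

section
/- Let V = {(x,y) ∈ ℕ₊² : x < y} and define ℓ(x,y) = (log y)/(log x) if x > 1 and ℓ(x,y) = 1 if x = 1. For every (x,y) ∈ V and every t ∈ [1,∞], there exists a sequence (a_n)_{n≥1} of positive integers such that the trail (v_n) defined by v_0 = (x,y) and v_{n+1} = (y_n, a_{n+1}·y_n + x_n) where v_n = (x_n, y_n) satisfies ℓ(v_n) → t as n → ∞. -/
/-!
Take real exponents `s n ≥ 1` tending to `t` and, at a vertex `(u, z)` of step `n`, the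
multiplier `a = ⌊z ^ (s n - 1)⌋₊ + 1`. As `u < z`, `z ^ (s n) ≤ a z + u ≤ 3 z ^ (s n)`, so the next
vertex has weight in `[s n, s n + log 3 / log z]`; since the second coordinate grows without
bound along any trail, the error term tends to `0`.
-/

open Filter Topology

/-- The weight function on vertices `(x, y)` with `1 ≤ x < y`. -/
noncomputable def ellFn (p : ℕ × ℕ) : ℝ :=
  if 1 < p.1 then Real.log (p.2 : ℝ) / Real.log (p.1 : ℝ) else 1

namespace HappyTrails

lemma exists_seq_tendsto_of_one_le {t : EReal} (ht : 1 ≤ t) :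
    ∃ s : ℕ → ℝ, (∀ n, 1 ≤ s n) ∧ Tendsto (fun n => (s n : EReal)) atTop (𝓝 t) := by
  induction t using EReal.rec with
  | bot => exact absurd (le_bot_iff.1 ht) (EReal.coe_ne_bot 1)
  | coe r => exact ⟨fun _ => r, fun _ => mod_cast ht, tendsto_const_nhds⟩
  | top =>
    refine ⟨fun n => n + 1, fun n => by simp, EReal.tendsto_coe_nhds_top_iff.2 ?_⟩
    exact tendsto_atTop_add_const_right _ 1 tendsto_natCast_atTop_atTop

lemma tendsto_coe_of_le_of_le_add {s u ε : ℕ → ℝ} {t : EReal}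
    (hs : Tendsto (fun n => (s n : EReal)) atTop (𝓝 t)) (ht : t ≠ ⊥)
    (hε : Tendsto ε atTop (𝓝 0)) (hsu : ∀ n, s n ≤ u n) (hus : ∀ n, u n ≤ s n + ε n) :
    Tendsto (fun n => (u n : EReal)) atTop (𝓝 t) := by
  have hdiff : Tendsto (fun n => u n - s n) atTop (𝓝 0) :=
    tendsto_of_tendsto_of_tendsto_of_le_of_le tendsto_const_nhds hε
      (fun n => sub_nonneg.2 (hsu n)) (fun n => sub_le_iff_le_add'.2 (hus n))
  have hadd : Tendsto (fun n => (s n : EReal) + ((u n - s n : ℝ) : EReal)) atTop (𝓝 (t + 0)) :=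
    (EReal.continuousAt_add (p := (t, 0)) (Or.inr (by simp)) (Or.inl ht)).tendsto.comp
      (hs.prodMk_nhds (EReal.tendsto_coe.2 hdiff))
  rw [add_zero] at hadd
  refine hadd.congr fun n => ?_
  rw [← EReal.coe_add, add_sub_cancel]

lemma log_div_log_mem_Icc {z w s C : ℝ} (hz : 1 < z) (hlow : z ^ s ≤ w) (hhigh : w ≤ C * z ^ s) :
    Real.log w / Real.log z ∈ Set.Icc s (s + Real.log C / Real.log z) := by
  have hzs : 0 < z ^ s := Real.rpow_pos_of_pos (by linarith) s
  have hC : 0 < C := pos_of_mul_pos_left (hzs.trans_le (hlow.trans hhigh)) hzs.le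
  have hlogz : 0 < Real.log z := Real.log_pos hz
  have hlogzs : Real.log (z ^ s) = s * Real.log z := Real.log_rpow (by linarith) s
  have h1 := Real.log_le_log hzs hlow
  have h2 := Real.log_le_log (hzs.trans_le hlow) hhigh
  rw [Real.log_mul hC.ne' hzs.ne'] at h2
  constructor
  · rw [le_div_iff₀ hlogz]; linarith
  · rw [div_le_iff₀ hlogz, add_mul, div_mul_cancel₀ _ hlogz.ne']; linarith

lemma rpow_le_floor_rpow_add_one_mul_add {z s u : ℝ} (hz : 0 < z) (hu : 0 ≤ u) :
    z ^ s ≤ (⌊z ^ (s - 1)⌋₊ + 1) * z + u := by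
  have hfloor := (Nat.lt_floor_add_one (z ^ (s - 1))).le
  calc z ^ s = z ^ (s - 1) * z := by rw [Real.rpow_sub_one hz.ne', div_mul_cancel₀ _ hz.ne']
    _ ≤ (⌊z ^ (s - 1)⌋₊ + 1) * z := by gcongr
    _ ≤ _ := le_add_of_nonneg_right hu

lemma floor_rpow_add_one_mul_add_le {z s u : ℝ} (hz : 1 ≤ z) (hs : 1 ≤ s) (huz : u ≤ z) :
    (⌊z ^ (s - 1)⌋₊ + 1) * z + u ≤ 3 * z ^ s := by
  have hz0 : 0 < z := by linarith
  have hpow : 1 ≤ z ^ (s - 1) := Real.one_le_rpow hz (by linarith)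
  have hfloor : (⌊z ^ (s - 1)⌋₊ : ℝ) ≤ z ^ (s - 1) := Nat.floor_le (by linarith)
  have hzs : z ^ s = z ^ (s - 1) * z := by
    rw [Real.rpow_sub_one hz0.ne', div_mul_cancel₀ _ hz0.ne']
  rw [hzs]
  nlinarith

def IsTrail (a : ℕ → ℕ) (v : ℕ → ℕ × ℕ) : Prop :=
  ∀ n, v (n + 1) = ((v n).2, a (n + 1) * (v n).2 + (v n).1)

section IsTrail

variable {a : ℕ → ℕ} {v : ℕ → ℕ × ℕ}

lemma IsTrail.pos_fst_lt_snd (hv : IsTrail a v) (ha : ∀ n, 0 < a n) (h0 : 0 < (v 0).1)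
    (h01 : (v 0).1 < (v 0).2) : ∀ n, 0 < (v n).1 ∧ (v n).1 < (v n).2
  | 0 => ⟨h0, h01⟩
  | n + 1 => by
    obtain ⟨hpos, hlt⟩ := hv.pos_fst_lt_snd ha h0 h01 n
    rw [hv n]
    exact ⟨hpos.trans hlt, by nlinarith [ha (n + 1)]⟩

lemma IsTrail.lt_snd (hv : IsTrail a v) (ha : ∀ n, 0 < a n) (h0 : 0 < (v 0).1)
    (h01 : (v 0).1 < (v 0).2) : ∀ n, n < (v n).2
  | 0 => h0.trans h01
  | n + 1 => by
    have ih := hv.lt_snd ha h0 h01 n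
    have hpos := (hv.pos_fst_lt_snd ha h0 h01 n).1
    rw [hv n]
    nlinarith [ha (n + 1)]

lemma IsTrail.tendsto_snd (hv : IsTrail a v) (ha : ∀ n, 0 < a n) (h0 : 0 < (v 0).1)
    (h01 : (v 0).1 < (v 0).2) : Tendsto (fun n => (v n).2) atTop atTop :=
  tendsto_atTop_mono (fun n => (hv.lt_snd ha h0 h01 n).le) tendsto_id

lemma IsTrail.ellFn_succ (hv : IsTrail a v) {n : ℕ} (h : 1 < (v n).2) :
    ellFn (v (n + 1)) = Real.log (v (n + 1)).2 / Real.log (v n).2 := by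
  rw [ellFn, if_pos (by rw [hv n]; exact h)]
  simp only [hv n]

lemma IsTrail.ellFn_succ_mem_Icc (hv : IsTrail a v) (ha : ∀ n, 0 < a n) (h0 : 0 < (v 0).1)
    (h01 : (v 0).1 < (v 0).2) {s : ℕ → ℝ} (hs : ∀ n, 1 ≤ s n)
    (has : ∀ n, a (n + 1) = ⌊((v n).2 : ℝ) ^ (s n - 1)⌋₊ + 1) (n : ℕ) :
    ellFn (v (n + 1)) ∈ Set.Icc (s n) (s n + Real.log 3 / Real.log (v n).2) := by
  have hinv := hv.pos_fst_lt_snd ha h0 h01 n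
  have hz : 1 < (v n).2 := by omega
  have hz' : (1 : ℝ) < (v n).2 := mod_cast hz
  have hu : ((v n).1 : ℝ) ≤ (v n).2 := mod_cast hinv.2.le
  rw [hv.ellFn_succ hz, hv n]
  apply log_div_log_mem_Icc hz' <;> push_cast [has]
  · exact rpow_le_floor_rpow_add_one_mul_add (by linarith) (Nat.cast_nonneg _)
  · exact floor_rpow_add_one_mul_add_le hz'.le (hs n) hu

end IsTrail

def trailOf (x y : ℕ) (c : ℕ → ℕ → ℕ) : ℕ → ℕ × ℕ
  | 0 => (x, y)
  | n + 1 =>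
    ((trailOf x y c n).2, c n (trailOf x y c n).2 * (trailOf x y c n).2 + (trailOf x y c n).1)

lemma exists_isTrail (x y : ℕ) (c : ℕ → ℕ → ℕ) (hc : ∀ n z, 0 < c n z) :
    ∃ a : ℕ → ℕ, (∀ n, 0 < a n) ∧ ∃ v : ℕ → ℕ × ℕ, v 0 = (x, y) ∧ IsTrail a v ∧
      ∀ n, a (n + 1) = c n (v n).2 :=
  ⟨fun n => c (n - 1) (trailOf x y c (n - 1)).2, fun _ => hc _ _, trailOf x y c, rfl,
    fun _ => rfl, fun _ => rfl⟩

end HappyTrails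

open HappyTrails in
theorem happy_trails (x y : ℕ) (hx : 0 < x) (hxy : x < y) (t : EReal) (ht : 1 ≤ t) :
    ∃ a : ℕ → ℕ, (∀ n, 0 < a n) ∧
      ∃ v : ℕ → ℕ × ℕ, v 0 = (x, y) ∧
        (∀ n : ℕ, v (n + 1) = ((v n).2, a (n + 1) * (v n).2 + (v n).1)) ∧
        Filter.Tendsto (fun n => (ellFn (v n) : EReal)) Filter.atTop (nhds t) := by
  obtain ⟨s, hs, hst⟩ := exists_seq_tendsto_of_one_le ht
  obtain ⟨a, ha, v, hv0, hv, has⟩ := exists_isTrail x y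
    (fun n z => ⌊(z : ℝ) ^ (s n - 1)⌋₊ + 1) (fun _ _ => Nat.succ_pos _)
  refine ⟨a, ha, v, hv0, hv, ?_⟩
  have h0 : 0 < (v 0).1 := by rw [hv0]; exact hx
  have h01 : (v 0).1 < (v 0).2 := by rw [hv0]; exact hxy
  have hlog : Tendsto (fun n => Real.log 3 / Real.log (v n).2) atTop (𝓝 0) :=
    tendsto_const_nhds.div_atTop (Real.tendsto_log_atTop.comp
      (tendsto_natCast_atTop_atTop.comp (hv.tendsto_snd ha h0 h01)))
  rw [← tendsto_add_atTop_iff_nat 1]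
  exact tendsto_coe_of_le_of_le_add hst (ne_bot_of_le_ne_bot (EReal.coe_ne_bot 1) ht) hlog
    (fun n => (hv.ellFn_succ_mem_Icc ha h0 h01 hs has n).1)
    (fun n => (hv.ellFn_succ_mem_Icc ha h0 h01 hs has n).2)
end

section
/- For every irrational α, the set T(α) := {θ ≥ 1 : liminf_{q→∞} q^θ·‖qα‖ = 0} satisfies T(1/α) = T(α). -/
/-!
If `p` is the integer nearest to `q α`, then `|p α⁻¹ - q| = ‖q α‖ / |α|` and `p ≈ q |α|`, so
`p^θ ‖p α⁻¹‖ ≤ C · q^θ ‖q α‖` with `C` depending only on `α` and `θ`. Hence "`q^θ ‖q α‖ < c` for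
infinitely many `q`" transfers between `α` and `α⁻¹` up to constant factors. A nonnegative real
sequence has `liminf = 0` exactly when it is frequently below every `ε > 0` or (Lean's junk value)
tends to `+∞`, and both alternatives survive such a transfer in both directions.
-/

open Filter Topology

/-- Distance from a real number to the nearest integer. -/
noncomputable def nearInt (x : ℝ) : ℝ := |x - round x|

/-- The set `T(α)` of exponents `θ ≥ 1` with `liminf q^θ ‖qα‖ = 0`. -/
noncomputable def tauSet (α : ℝ) : Set ℝ :=
  {θ : ℝ | 1 ≤ θ ∧ Filter.liminf (fun q : ℕ => (q : ℝ) ^ θ * nearInt (q * α)) Filter.atTop = 0}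

lemma nearInt_nonneg (x : ℝ) : 0 ≤ nearInt x := abs_nonneg _

lemma nearInt_le (x : ℝ) (m : ℤ) : nearInt x ≤ |x - m| := round_le x m

lemma nearInt_neg (x : ℝ) : nearInt (-x) = nearInt x := by
  have neg_le (y : ℝ) : nearInt (-y) ≤ nearInt y :=
    (nearInt_le (-y) (-round y)).trans_eq (by rw [nearInt, ← abs_neg]; push_cast; ring_nf)
  exact le_antisymm (neg_le x) (by simpa using neg_le (-x))

lemma nearInt_abs_mul (a y : ℝ) : nearInt (|a| * y) = nearInt (a * y) := by
  rcases abs_choice a with h | h <;> simp [h, nearInt_neg]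

namespace Real

variable {ι : Type*} {l : Filter ι} {f g : ι → ℝ}

/-- The disjunct `Tendsto f l atTop` is the junk case: a real `liminf` that is not cobounded is `0`. -/
lemma liminf_eq_zero_iff (hf : 0 ≤ f) :
    liminf f l = 0 ↔ Tendsto f l atTop ∨ ∀ ε > 0, ∃ᶠ i in l, f i < ε := by
  by_cases hcob : l.IsCoboundedUnder (· ≥ ·) f
  · have hbdd : l.IsBoundedUnder (· ≥ ·) f := isBoundedUnder_of_eventually_ge (.of_forall hf)
    have hnot : ¬ Tendsto f l atTop := by
      obtain ⟨b, hb⟩ := hcob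
      exact fun ht => (lt_add_one b).not_ge (hb _ (tendsto_atTop.1 ht (b + 1)))
    have h0 : 0 ≤ liminf f l := le_liminf_of_le hcob (.of_forall hf)
    rw [le_antisymm_iff, liminf_le_iff hcob hbdd, and_iff_left h0, or_iff_right hnot]
  · refine iff_of_true (liminf_of_not_isCoboundedUnder hcob) (.inl ?_)
    simp only [IsCoboundedUnder, IsCobounded, eventually_map, not_exists, not_forall] at hcob
    refine tendsto_atTop.2 fun b => ?_
    obtain ⟨a, ha, hba⟩ := hcob b
    exact ha.mono fun i hi => (le_of_not_ge hba).trans hi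

lemma liminf_eq_zero_of_frequently_lt (hf : 0 ≤ f) (hg : 0 ≤ g) {K L : ℝ} (hK : 0 < K)
    (hfg : ∀ c, (∃ᶠ i in l, f i < c) → ∃ᶠ i in l, g i < K * c)
    (hgf : ∀ c, (∃ᶠ i in l, g i < c) → ∃ᶠ i in l, f i < L * c) (h : liminf f l = 0) :
    liminf g l = 0 := by
  rw [liminf_eq_zero_iff hf] at h
  rw [liminf_eq_zero_iff hg]
  rcases h with htop | hsmall
  · refine .inl (tendsto_atTop.2 fun c => ?_)
    by_contra hc
    have hgc : ∃ᶠ i in l, g i < c := (not_eventually.1 hc).mono fun _ => lt_of_not_ge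
    obtain ⟨i, hle, hlt⟩ := ((tendsto_atTop.1 htop (L * c)).and_frequently (hgf c hgc)).exists
    exact hlt.not_ge hle
  · refine .inr fun ε hε => ?_
    simpa [mul_div_cancel₀ _ hK.ne'] using hfg (ε / K) (hsmall _ (div_pos hε hK))

lemma liminf_eq_zero_iff_of_frequently_lt (hf : 0 ≤ f) (hg : 0 ≤ g) {K L : ℝ} (hK : 0 < K)
    (hL : 0 < L) (hfg : ∀ c, (∃ᶠ i in l, f i < c) → ∃ᶠ i in l, g i < K * c)
    (hgf : ∀ c, (∃ᶠ i in l, g i < c) → ∃ᶠ i in l, f i < L * c) :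
    liminf f l = 0 ↔ liminf g l = 0 :=
  ⟨liminf_eq_zero_of_frequently_lt hf hg hK hfg hgf,
    liminf_eq_zero_of_frequently_lt hg hf hL hgf hfg⟩

end Real

lemma exists_nat_near_mul_abs_nearInt_inv_le {α : ℝ} (hα : α ≠ 0) (q : ℕ) :
    ∃ p : ℕ, |(p : ℝ) - q * (|α|)| ≤ 1 / 2 ∧ nearInt (p * α⁻¹) ≤ nearInt (q * α) / |α| := by
  set r := round ((q : ℝ) * α)
  have hp : ((r.natAbs : ℕ) : ℝ) = |(r : ℝ)| := by rw [Nat.cast_natAbs, Int.cast_abs]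
  refine ⟨r.natAbs, ?_, ?_⟩
  · calc |((r.natAbs : ℕ) : ℝ) - q * (|α|)|
        = |(|(r : ℝ)| - |(q : ℝ) * α|)| := by rw [hp, abs_mul, Nat.abs_cast]
      _ ≤ |(q : ℝ) * α - r| := by rw [abs_sub_comm]; exact abs_abs_sub_abs_le_abs_sub _ _
      _ ≤ 1 / 2 := abs_sub_round _
  · calc nearInt (((r.natAbs : ℕ) : ℝ) * α⁻¹)
        = nearInt (r * α⁻¹) := by rw [hp, nearInt_abs_mul]
      _ ≤ |r * α⁻¹ - q| := by exact_mod_cast nearInt_le _ q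
      _ = |(q : ℝ) * α - r| / |α| := by
        rw [← abs_div, abs_sub_comm]; congr 1; field_simp
      _ = nearInt (q * α) / |α| := rfl

lemma frequently_rpow_mul_nearInt_inv_lt {α θ c : ℝ} (hα : α ≠ 0) (hθ : 0 ≤ θ)
    (h : ∃ᶠ q : ℕ in atTop, (q : ℝ) ^ θ * nearInt (q * α) < c) :
    ∃ᶠ p : ℕ in atTop, (p : ℝ) ^ θ * nearInt (p * α⁻¹) < (|α| + 1) ^ θ / |α| * c := by
  have hα' : 0 < |α| := abs_pos.2 hα
  choose φ hφ_near hφ_approx using exists_nat_near_mul_abs_nearInt_inv_le hα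
  have hφ : Tendsto φ atTop atTop := by
    refine tendsto_natCast_atTop_iff.1 (tendsto_atTop_mono (fun q => ?_)
      (tendsto_atTop_add_const_right _ (-1 / 2)
        (tendsto_natCast_atTop_atTop.atTop_mul_const hα')))
    linarith [(abs_le.1 (hφ_near q)).1]
  refine hφ.frequently_map _ (fun q ⟨hq, hq1⟩ => ?_) (h.and_eventually (eventually_ge_atTop 1))
  have hq1' : (1 : ℝ) ≤ q := by exact_mod_cast hq1
  have hφ_le : (φ q : ℝ) ≤ q * (|α| + 1) := by linarith [(abs_le.1 (hφ_near q)).2]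
  calc (φ q : ℝ) ^ θ * nearInt (φ q * α⁻¹)
      ≤ ((q : ℝ) * (|α| + 1)) ^ θ * (nearInt (q * α) / |α|) := by
        gcongr
        · exact nearInt_nonneg _
        · exact hφ_approx q
    _ = (|α| + 1) ^ θ / |α| * ((q : ℝ) ^ θ * nearInt (q * α)) := by
        rw [Real.mul_rpow (by positivity) (by positivity)]; ring
    _ < (|α| + 1) ^ θ / |α| * c := by gcongr

lemma rpow_mul_nearInt_nonneg (α θ : ℝ) : 0 ≤ fun q : ℕ => (q : ℝ) ^ θ * nearInt (q * α) :=
  fun q => mul_nonneg (Real.rpow_nonneg q.cast_nonneg θ) (nearInt_nonneg _)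

theorem tauSet_inv (α : ℝ) (hα : Irrational α) : tauSet α⁻¹ = tauSet α := by
  have hα₀ : α ≠ 0 := hα.ne_zero
  ext θ
  refine and_congr_right fun hθ => ?_
  have hθ₀ : 0 ≤ θ := zero_le_one.trans hθ
  refine Real.liminf_eq_zero_iff_of_frequently_lt (rpow_mul_nearInt_nonneg _ θ)
    (rpow_mul_nearInt_nonneg α θ) (K := (|α⁻¹| + 1) ^ θ / |α⁻¹|) (L := (|α| + 1) ^ θ / |α|)
    (by positivity) (by positivity) (fun _ h => ?_)
    (fun _ => frequently_rpow_mul_nearInt_inv_lt hα₀ hθ₀)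
  simpa only [inv_inv] using frequently_rpow_mul_nearInt_inv_lt (inv_ne_zero hα₀) hθ₀ h
end
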